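/- Let n = p q^b, where p and q are distinct primes and b ≥ 2. Then the independence number of the prime-coprime graph of the cyclic group Z_n equals n − min{pq, q^b + p − 1}. -/

import Mathlib

/-- The prime-coprime graph: distinct vertices `g, h` are adjacent iff
`gcd (orderOf g) (orderOf h)` is `1` or a prime. -/
def primeCoprimeGraph (G : Type*) [Monoid G] : SimpleGraph G where
  Adj g h := g ≠ h ∧
    (Nat.gcd (orderOf g) (orderOf h) = 1 ∨ (Nat.gcd (orderOf g) (orderOf h)).Prime)
  symm := ⟨by
    rintro g h ⟨hne, hd⟩
    exact ⟨hne.symm, by rwa [Nat.gcd_comm]⟩⟩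
  loopless := ⟨by rintro g ⟨hne, -⟩; exact hne rfl⟩

/-- A set of vertices is independent if no two of its elements are adjacent. -/
def IsIndepSet {V : Type*} (Γ : SimpleGraph V) (s : Set V) : Prop :=
  s.Pairwise fun a b => ¬ Γ.Adj a b

open scoped Classical in
/-- The independence number of a graph on a finite vertex set. -/
noncomputable def indepNum {V : Type*} [Fintype V] (Γ : SimpleGraph V) : ℕ :=
  Finset.univ.sup fun s : Finset V => if IsIndepSet Γ (s : Set V) then s.card else 0

/-- A graph is split if its vertex set can be partitioned into two disjoint nonempty
subsets, one a clique and the other an independent set. -/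
def IsSplit {V : Type*} (Γ : SimpleGraph V) : Prop :=
  ∃ K I : Set V, K.Nonempty ∧ I.Nonempty ∧ Disjoint K I ∧ K ∪ I = Set.univ ∧
    Γ.IsClique K ∧ IsIndepSet Γ I

/-!
Two vertices are non-adjacent exactly when the gcd of their orders is neither `1` nor a prime;
for a divisor of `p * q ^ b` this means that it is divisible by `q ^ 2` or by `p * q`. So if an
independent set with at least two elements contains some `x` with `q ^ 2 ∤ |x|`, every other
element shares the factor `p * q` with `x`: the set lies in `{x | q ^ 2 ∣ |x|}` or in
`{x | p * q ∣ |x|}`. Both of these are independent, and since a cyclic group has exactly `d`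
elements of order dividing `d ∣ n`, their sizes are `n - p * q` and `n - (q ^ b + p - 1)`.
-/

open Finset

lemma isIndepSet_primeCoprimeGraph_of_dvd_orderOf {G : Type*} [Monoid G] {k : ℕ}
    (hk1 : k ≠ 1) (hk : ¬ k.Prime) {s : Set G} (hs : ∀ x ∈ s, k ∣ orderOf x) :
    IsIndepSet (primeCoprimeGraph G) s := by
  rintro x hx y hy - ⟨-, hxy⟩
  have hdvd : k ∣ Nat.gcd (orderOf x) (orderOf y) := Nat.dvd_gcd (hs x hx) (hs y hy)
  rcases hxy with h | h
  · exact hk1 (Nat.dvd_one.mp (h ▸ hdvd))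
  · rcases (Nat.dvd_prime h).mp hdvd with rfl | rfl
    exacts [hk1 rfl, hk h]

lemma IsIndepSet.subsingleton_or_forall_dvd_orderOf {G : Type*} [Monoid G] {k₁ k₂ : ℕ}
    {s : Set G} (hs : IsIndepSet (primeCoprimeGraph G) s)
    (hk : ∀ x y : G, Nat.gcd (orderOf x) (orderOf y) ≠ 1 →
      ¬ (Nat.gcd (orderOf x) (orderOf y)).Prime →
      k₁ ∣ Nat.gcd (orderOf x) (orderOf y) ∨ k₂ ∣ Nat.gcd (orderOf x) (orderOf y)) :
    s.Subsingleton ∨ (∀ x ∈ s, k₁ ∣ orderOf x) ∨ ∀ x ∈ s, k₂ ∣ orderOf x := by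
  refine or_iff_not_imp_left.2 fun hnt => or_iff_not_imp_left.2 fun h₁ => ?_
  obtain ⟨x, hx, hx₁⟩ := not_forall₂.mp h₁
  have hdvd : ∀ y ∈ s, y ≠ x → k₂ ∣ orderOf x ∧ k₂ ∣ orderOf y := by
    intro y hy hyx
    have hna : ¬ (primeCoprimeGraph G).Adj x y := hs hx hy hyx.symm
    simp only [primeCoprimeGraph, not_and, not_or] at hna
    obtain ⟨h1, hpr⟩ := hna hyx.symm
    have h₂ := (hk x y h1 hpr).resolve_left fun h => hx₁ (h.trans (Nat.gcd_dvd_left _ _))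
    exact ⟨h₂.trans (Nat.gcd_dvd_left _ _), h₂.trans (Nat.gcd_dvd_right _ _)⟩
  obtain ⟨y, hy, hyx⟩ := (Set.not_subsingleton_iff.mp hnt).exists_ne x
  intro z hz
  rcases eq_or_ne z x with rfl | hzx
  exacts [(hdvd y hy hyx).1, (hdvd z hz hzx).2]

section IndepNum

variable {V : Type*} [Fintype V] {Γ : SimpleGraph V}

open scoped Classical in
lemma card_le_indepNum {s : Finset V} (hs : IsIndepSet Γ s) : #s ≤ indepNum Γ :=
  (if_pos hs).symm.le.trans <|
    le_sup (f := fun t : Finset V => if IsIndepSet Γ t then #t else 0) (mem_univ s)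

lemma indepNum_le {m : ℕ} (h : ∀ s : Finset V, IsIndepSet Γ s → #s ≤ m) :
    indepNum Γ ≤ m :=
  Finset.sup_le fun s _ => by split_ifs with hs; exacts [h s hs, Nat.zero_le _]

lemma indepNum_eq_max {T₁ T₂ : Finset V} (h₁ : IsIndepSet Γ T₁) (h₂ : IsIndepSet Γ T₂)
    (hT₂ : T₂.Nonempty) (h : ∀ s : Finset V, IsIndepSet Γ s →
      (s : Set V).Subsingleton ∨ s ⊆ T₁ ∨ s ⊆ T₂) :
    indepNum Γ = max #T₁ #T₂ := by
  refine le_antisymm (indepNum_le fun s hs => ?_)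
    (max_le (card_le_indepNum h₁) (card_le_indepNum h₂))
  rcases h s hs with hs | hs | hs
  · exact (Finset.card_le_one.2 fun a ha b hb => hs ha hb).trans
      ((one_le_card.2 hT₂).trans (le_max_right _ _))
  · exact (card_le_card hs).trans (le_max_left _ _)
  · exact (card_le_card hs).trans (le_max_right _ _)

end IndepNum

lemma IsCyclic.card_filter_orderOf_dvd {α : Type*} [Group α] [Fintype α] [IsCyclic α]
    [DecidableEq α] {d : ℕ} (hd : d ∣ Fintype.card α) : #{a : α | orderOf a ∣ d} = d := by
  have hd0 : d ≠ 0 := (Nat.pos_of_dvd_of_pos hd Fintype.card_pos).ne'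
  have h := sum_card_orderOf_eq_card_pow_eq_one (G := α) hd0
  simp only [← orderOf_dvd_iff_pow_eq_one] at h
  rw [← h, sum_congr rfl fun m hm =>
    IsCyclic.card_orderOf_eq_totient ((Nat.mem_divisors.mp hm).1.trans hd)]
  exact Nat.sum_totient d

namespace Nat

variable {p q b d : ℕ}

lemma exists_eq_pow_or_eq_mul_pow_of_dvd (hp : p.Prime) (hq : q.Prime)
    (hd : d ∣ p * q ^ b) : ∃ i ≤ b, d = q ^ i ∨ d = p * q ^ i := by
  obtain ⟨y, z, hy, hz, rfl⟩ := dvd_mul.mp hd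
  obtain ⟨i, hi, rfl⟩ := (dvd_prime_pow hq).mp hz
  rcases (dvd_prime hp).mp hy with rfl | rfl
  exacts [⟨i, hi, .inl (one_mul _)⟩, ⟨i, hi, .inr rfl⟩]

variable (hp : p.Prime) (hq : q.Prime)
include hp hq

lemma dvd_mul_iff_not_sq_dvd (hpq : p ≠ q) (hd : d ∣ p * q ^ b) :
    d ∣ p * q ↔ ¬ q ^ 2 ∣ d := by
  constructor
  · intro h hsq
    have : q * q ∣ p * q := by simpa [sq] using hsq.trans h
    exact hpq ((prime_dvd_prime_iff_eq hq hp).mp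
      (Nat.dvd_of_mul_dvd_mul_right hq.pos this)).symm
  · intro hsq
    obtain ⟨i, -, hdi⟩ := exists_eq_pow_or_eq_mul_pow_of_dvd hp hq hd
    have hi : i < 2 := by
      by_contra! hi
      refine hsq ((pow_dvd_pow q hi).trans ?_)
      rcases hdi with rfl | rfl <;> simp
    interval_cases i <;> rcases hdi with rfl | rfl <;> simp

lemma not_mul_dvd_iff_dvd_or_dvd (hpq : p ≠ q) (hd : d ∣ p * q ^ b) :
    ¬ p * q ∣ d ↔ d ∣ q ^ b ∨ d ∣ p := by
  constructor
  · obtain ⟨i, hi, rfl | rfl⟩ := exists_eq_pow_or_eq_mul_pow_of_dvd hp hq hd <;> intro h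
    · exact .inl (pow_dvd_pow q hi)
    · rcases i with _ | i
      · simp
      · exact absurd (mul_dvd_mul_left p (dvd_pow_self q i.succ_ne_zero)) h
  · rintro (h | h) hpqd
    · exact hpq ((prime_dvd_prime_iff_eq hp hq).mp
        (hp.dvd_of_dvd_pow (((dvd_mul_right p q).trans hpqd).trans h)))
    · exact hpq ((prime_dvd_prime_iff_eq hq hp).mp
        (((dvd_mul_left q p).trans hpqd).trans h)).symm

lemma sq_dvd_or_mul_dvd_of_not_prime (hd : d ∣ p * q ^ b) (hd1 : d ≠ 1) (hdp : ¬ d.Prime) :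
    q ^ 2 ∣ d ∨ p * q ∣ d := by
  obtain ⟨i, -, rfl | rfl⟩ := exists_eq_pow_or_eq_mul_pow_of_dvd hp hq hd <;>
    rcases i with _ | _ | i
  · simp at hd1
  · simp [hq] at hdp
  · exact .inl (pow_dvd_pow q (by omega))
  · simp [hp] at hdp
  · simp
  · exact .inl ((pow_dvd_pow q (by omega)).mul_left p)

end Nat

section CyclicGroup

variable {G : Type*} [Group G] [Fintype G] [IsCyclic G] [DecidableEq G] {p q b : ℕ}
  (hp : p.Prime) (hq : q.Prime) (hpq : p ≠ q) (hG : Fintype.card G = p * q ^ b)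
include hp hq hpq hG

lemma card_filter_sq_dvd_orderOf (hb : 1 ≤ b) :
    #{x : G | q ^ 2 ∣ orderOf x} = p * q ^ b - p * q := by
  have hcompl :
      ({x | q ^ 2 ∣ orderOf x} : Finset G) = ({x | orderOf x ∣ p * q} : Finset G)ᶜ := by
    ext x
    simp [Nat.dvd_mul_iff_not_sq_dvd hp hq hpq (orderOf_dvd_card.trans (dvd_of_eq hG))]
  have hpq_dvd : p * q ∣ Fintype.card G := hG ▸ mul_dvd_mul_left p (dvd_pow_self q (by omega))
  rw [hcompl, card_compl, IsCyclic.card_filter_orderOf_dvd hpq_dvd, hG]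

lemma card_filter_mul_dvd_orderOf :
    #{x : G | p * q ∣ orderOf x} = p * q ^ b - (q ^ b + p - 1) := by
  have hcompl : ({x | p * q ∣ orderOf x} : Finset G)ᶜ =
      ({x | orderOf x ∣ q ^ b} : Finset G) ∪ ({x | orderOf x ∣ p} : Finset G) := by
    ext x
    simp [Nat.not_mul_dvd_iff_dvd_or_dvd hp hq hpq (orderOf_dvd_card.trans (dvd_of_eq hG))]
  have hcop : Nat.Coprime (q ^ b) p := ((Nat.coprime_primes hq hp).mpr hpq.symm).pow_left b
  have hinter :
      ({x | orderOf x ∣ q ^ b} : Finset G) ∩ ({x | orderOf x ∣ p} : Finset G) = {1} := by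
    ext x
    simp [← Nat.dvd_gcd_iff, hcop]
  have hunion := card_union_add_card_inter
    ({x | orderOf x ∣ q ^ b} : Finset G) {x | orderOf x ∣ p}
  rw [hinter, card_singleton, IsCyclic.card_filter_orderOf_dvd (hG ▸ dvd_mul_left _ _),
    IsCyclic.card_filter_orderOf_dvd (hG ▸ dvd_mul_right _ _), ← hcompl] at hunion
  have := card_compl_add_card ({x | p * q ∣ orderOf x} : Finset G)
  omega

theorem indepNum_primeCoprimeGraph_of_card_eq (hb : 1 ≤ b) :
    indepNum (primeCoprimeGraph G) = p * q ^ b - min (p * q) (q ^ b + p - 1) := by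
  have horder (x : G) : orderOf x ∣ p * q ^ b := orderOf_dvd_card.trans (dvd_of_eq hG)
  have hT₂ : ({x | p * q ∣ orderOf x} : Finset G).Nonempty := by
    obtain ⟨g, hg⟩ := IsCyclic.exists_ofOrder_eq_natCard (α := G)
    refine ⟨g, mem_filter.2 ⟨mem_univ g, ?_⟩⟩
    rw [hg, Nat.card_eq_fintype_card, hG]
    exact mul_dvd_mul_left p (dvd_pow_self q (by omega))
  have hindep {k : ℕ} (hk1 : k ≠ 1) (hk : ¬ k.Prime) :
      IsIndepSet (primeCoprimeGraph G) ({x | k ∣ orderOf x} : Finset G) :=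
    isIndepSet_primeCoprimeGraph_of_dvd_orderOf hk1 hk (by simp)
  have hsplit (s : Finset G) (hs : IsIndepSet (primeCoprimeGraph G) s) :
      (s : Set G).Subsingleton ∨ s ⊆ ({x | q ^ 2 ∣ orderOf x} : Finset G) ∨
        s ⊆ ({x | p * q ∣ orderOf x} : Finset G) := by
    simpa [subset_iff] using hs.subsingleton_or_forall_dvd_orderOf fun x y h1 hpr =>
      Nat.sq_dvd_or_mul_dvd_of_not_prime hp hq ((Nat.gcd_dvd_left _ _).trans (horder x)) h1 hpr
  rw [indepNum_eq_max (hindep (k := q ^ 2) (by simp [hq.ne_one]) (Nat.Prime.not_prime_pow le_rfl))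
    (hindep (fun h => hp.ne_one (mul_eq_one.1 h).1) (Nat.not_prime_mul hp.ne_one hq.ne_one))
    hT₂ hsplit, card_filter_sq_dvd_orderOf hp hq hpq hG hb,
    card_filter_mul_dvd_orderOf hp hq hpq hG]
  omega

end CyclicGroup

theorem indepNum_cyclic_pqb (n p q b : ℕ) [NeZero n] (hp : p.Prime) (hq : q.Prime)
    (hpq : p ≠ q) (hb : 2 ≤ b) (hn : n = p * q ^ b) :
    indepNum (primeCoprimeGraph (Multiplicative (ZMod n))) =
      n - min (p * q) (q ^ b + p - 1) := by
  subst hn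
  exact indepNum_primeCoprimeGraph_of_card_eq hp hq hpq (by simp) (by omega)
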